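/- In the restricted two-valued class-segregated buffer model (one 1-queue and one α-queue, α > 1, both of capacity B), for every input sequence σ, every feasible diligent schedule OPT, and every time t, the total number of packets stored in OPT's two queues at time t is at most B more than the total number of packets stored in GREEDY's two queues at time t: b*(t) ≤ b(t) + B. -/
import Mathlib


/-!
Model of class-segregated buffer management (Al-Bawani, Souza).

A switch has `n` queues and `m` packet values `val : Fin m → ℝ`; queue `q` is
assigned value index `qval q` and has capacity `cap q`.  An input sequence is a
list of events: an `arrive q` event (a packet destined to queue `q`) or a
`send` event.  A (diligent) schedule is given by its decisions at send events,
`dec : ℕ → Option (Fin n)` (decision for the `k`-th send event): acceptance is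
forced (accept iff the destination queue is not full), at a send event the
schedule transmits one packet from the chosen non-empty queue, and it may
choose `none` only if all queues are empty.  `run` simulates the schedule,
tracking queue contents, the number of accepted packets of each value, and the
number of transmitted packets of each value.  `Feasible` expresses diligence,
and `GreedyFeasible` additionally requires that every transmitted packet has
the highest value among non-empty queues (ties broken arbitrarily).
`benefit` is the total value of transmitted packets.
-/

namespace BufferModel

inductive BEvent (n : ℕ) : Type where
  | arrive (q : Fin n) : BEvent n
  | send : BEvent n
deriving DecidableEq

/-- `queue q` = number of packets currently in queue `q`; `acc i` = number of
packets of value index `i` accepted so far; `trans i` = number of packets of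
value index `i` transmitted so far. -/
structure BState (n m : ℕ) where
  queue : Fin n → ℕ
  acc : Fin m → ℕ
  trans : Fin m → ℕ

def initState (n m : ℕ) : BState n m :=
  ⟨fun _ => 0, fun _ => 0, fun _ => 0⟩

/-- Diligent processing of an arrive event at queue `q`: accept iff there is room. -/
def arriveStep {n m : ℕ} (cap : Fin n → ℕ) (qval : Fin n → Fin m)
    (s : BState n m) (q : Fin n) : BState n m :=
  if s.queue q < cap q then
    { queue := Function.update s.queue q (s.queue q + 1)
      acc := Function.update s.acc (qval q) (s.acc (qval q) + 1)
      trans := s.trans }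
  else s

/-- Processing of a send event with decision `d`. -/
def sendStep {n m : ℕ} (qval : Fin n → Fin m) (s : BState n m)
    (d : Option (Fin n)) : BState n m :=
  match d with
  | some q =>
      if 0 < s.queue q then
        { queue := Function.update s.queue q (s.queue q - 1)
          acc := s.acc
          trans := Function.update s.trans (qval q) (s.trans (qval q) + 1) }
      else s
  | none => s

/-- Simulate the schedule with send-decisions `dec` on an event list, starting
with send-counter `k` and state `s`. -/
def run {n m : ℕ} (cap : Fin n → ℕ) (qval : Fin n → Fin m)
    (dec : ℕ → Option (Fin n)) :
    List (BEvent n) → ℕ → BState n m → BState n m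
  | [], _, s => s
  | BEvent.arrive q :: es, k, s => run cap qval dec es k (arriveStep cap qval s q)
  | BEvent.send :: es, k, s => run cap qval dec es (k + 1) (sendStep qval s (dec k))

/-- The schedule `dec` is feasible (diligent): at each send event it transmits
from a non-empty queue, and it stays idle only if all queues are empty. -/
def Feasible {n m : ℕ} (cap : Fin n → ℕ) (qval : Fin n → Fin m)
    (dec : ℕ → Option (Fin n)) :
    List (BEvent n) → ℕ → BState n m → Prop
  | [], _, _ => True
  | BEvent.arrive q :: es, k, s => Feasible cap qval dec es k (arriveStep cap qval s q)
  | BEvent.send :: es, k, s =>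
      (match dec k with
       | some q => 0 < s.queue q
       | none => ∀ q, s.queue q = 0) ∧
      Feasible cap qval dec es (k + 1) (sendStep qval s (dec k))

/-- The schedule `dec` is a GREEDY schedule: feasible, and at every send event
it transmits a packet from a non-empty queue of the highest value. -/
def GreedyFeasible {n m : ℕ} (val : Fin m → ℝ) (cap : Fin n → ℕ)
    (qval : Fin n → Fin m) (dec : ℕ → Option (Fin n)) :
    List (BEvent n) → ℕ → BState n m → Prop
  | [], _, _ => True
  | BEvent.arrive q :: es, k, s =>
      GreedyFeasible val cap qval dec es k (arriveStep cap qval s q)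
  | BEvent.send :: es, k, s =>
      (match dec k with
       | some q => 0 < s.queue q ∧
           ∀ q', 0 < s.queue q' → val (qval q') ≤ val (qval q)
       | none => ∀ q, s.queue q = 0) ∧
      GreedyFeasible val cap qval dec es (k + 1) (sendStep qval s (dec k))

/-- Benefit of a schedule: total value of the transmitted packets. -/
def benefit {n m : ℕ} (val : Fin m → ℝ) (s : BState n m) : ℝ :=
  ∑ i, val i * (s.trans i : ℝ)

end BufferModel

namespace BufferModel

-- AUX

lemma upd00 (f : Fin 2 → ℕ) (v : ℕ) : Function.update f 0 v 0 = v :=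
  Function.update_self _ _ _
lemma upd01 (f : Fin 2 → ℕ) (v : ℕ) : Function.update f 0 v 1 = f 1 :=
  Function.update_of_ne (by decide) _ _
lemma upd10 (f : Fin 2 → ℕ) (v : ℕ) : Function.update f 1 v 0 = f 0 :=
  Function.update_of_ne (by decide) _ _
lemma upd11 (f : Fin 2 → ℕ) (v : ℕ) : Function.update f 1 v 1 = v :=
  Function.update_self _ _ _

lemma feasible_take {n m : ℕ} (cap : Fin n → ℕ) (qval : Fin n → Fin m)
    (dec : ℕ → Option (Fin n)) :
    ∀ (es : List (BEvent n)) (t k : ℕ) (s : BState n m),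
      Feasible cap qval dec es k s → Feasible cap qval dec (es.take t) k s := by
  intro es
  induction es with
  | nil => intro t k s _; cases t <;> trivial
  | cons e es ih =>
    intro t k s h
    cases t with
    | zero => trivial
    | succ t =>
      cases e with
      | arrive q => exact ih t k _ h
      | send => exact ⟨h.1, ih t (k + 1) _ h.2⟩

lemma main_lemma (B : ℕ) (g d : ℕ → Option (Fin 2)) :
    ∀ (es : List (BEvent 2)) (k : ℕ) (sd sg : BState 2 2),
      Feasible (fun _ => B) id d es k sd →
      (∀ q, sd.queue q ≤ B) →
      sd.queue 0 + sd.queue 1 ≤ sg.queue 0 + sg.queue 1 + B →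
      (run (fun _ => B) id d es k sd).queue 0 + (run (fun _ => B) id d es k sd).queue 1 ≤
        (run (fun _ => B) id g es k sg).queue 0 + (run (fun _ => B) id g es k sg).queue 1 + B := by
  intro es
  induction es with
  | nil => intro k sd sg _ _ hs; exact hs
  | cons e es ih =>
    intro k sd sg hf hb hs
    have h0 := hb 0
    have h1 := hb 1
    cases e with
    | arrive q =>
      simp only [run]
      apply ih k _ _ hf
      · intro q'
        simp only [arriveStep]
        split_ifs with h
        · rcases eq_or_ne q' q with rfl | hne
          · simp only [Function.update_self]; omega
          · simp only [Function.update_of_ne hne]; exact hb q'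
        · exact hb q'
      · simp only [arriveStep]
        split_ifs with hd1 hg1 hg1 <;>
          rcases (by omega : q = 0 ∨ q = 1) with rfl | rfl <;>
          (try simp only [upd00, upd01, upd10, upd11]) <;> omega
    | send =>
      simp only [run]
      obtain ⟨hdk, hf'⟩ := hf
      apply ih (k + 1) _ _ hf'
      · intro q'
        rcases hq : d k with _ | q <;> rw [hq] at hdk <;> simp only [sendStep]
        · exact hb q'
        · rw [if_pos hdk]
          rcases eq_or_ne q' q with rfl | hne
          · have hbq := hb q'
            simp only [Function.update_self]
            omega
          · exact le_of_eq_of_le (Function.update_of_ne hne _ _) (hb q')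
      · rcases hq : d k with _ | q <;> rcases hq' : g k with _ | q' <;>
          rw [hq] at hdk <;> simp only [sendStep]
        · exact hs
        · have e0 := hdk 0
          have e1 := hdk 1
          split_ifs with h
          · rcases (by omega : q' = 0 ∨ q' = 1) with rfl | rfl <;>
              (try simp only [upd00, upd01, upd10, upd11]) <;> omega
          · omega
        · rw [if_pos hdk]
          rcases (by omega : q = 0 ∨ q = 1) with rfl | rfl <;>
            (try simp only [upd00, upd01, upd10, upd11]) <;> omega
        · rw [if_pos hdk]
          split_ifs with h <;>
            rcases (by omega : q = 0 ∨ q = 1) with rfl | rfl <;>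
            rcases (by omega : q' = 0 ∨ q' = 1) with rfl | rfl <;>
            (try simp only [upd00, upd01, upd10, upd11]) <;> omega

/-- In the restricted two-valued class-segregated buffer
model (one `1`-queue = queue `0`, one `α`-queue = queue `1`, `α > 1`, both of
capacity `B`), for every input sequence `σ`, every feasible diligent schedule
`d` (playing the role of OPT), every GREEDY schedule `g`, and every time `t`
(i.e., after processing any prefix `σ.take t` of the event sequence), the
total content of OPT's queues is at most `B` more than that of GREEDY's:
`b*(t) ≤ b(t) + B`. -/
theorem opt_buffer_at_most_B_larger
    (α : ℝ) (hα : 1 < α) (B : ℕ)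
    (σ : List (BEvent 2)) (g d : ℕ → Option (Fin 2))
    (hg : GreedyFeasible ![1, α] (fun _ => B) id g σ 0 (initState 2 2))
    (hd : Feasible (fun _ => B) id d σ 0 (initState 2 2))
    (t : ℕ) :
    ∑ q, (run (fun _ => B) id d (σ.take t) 0 (initState 2 2)).queue q ≤
      (∑ q, (run (fun _ => B) id g (σ.take t) 0 (initState 2 2)).queue q) + B := by
  have hft := feasible_take (fun _ => B) id d σ t 0 (initState 2 2) hd
  have h := main_lemma B g d (σ.take t) 0 (initState 2 2) (initState 2 2) hft
    (fun q => Nat.zero_le B) (by simp [initState])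
  simpa [Fin.sum_univ_two] using h

end BufferModel
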